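/- Let T be the subgroup of the symmetric group on {0,...,11} generated by a = (0,7,11)(1,5,6)(2,9,10)(3,4,8) and b = (0,4,2)(1,5,9)(3,7,11)(6,10,8), let U = { id, (1,7)(4,10), (2,8)(5,11), (1,7)(2,8)(4,10)(5,11), (0,9)(2,11,8,5)(3,6)(4,10), (0,9)(1,7)(2,11,8,5)(3,6), (0,9)(2,5,8,11)(3,6)(4,10), (0,9)(1,7)(2,5,8,11)(3,6) } and V = { id, (1,7)(4,10), (0,6)(3,9), (0,6)(1,7)(3,9)(4,10), (0,3,6,9)(1,10)(2,8)(4,7), (0,3,6,9)(1,4)(2,8)(7,10), (0,9,6,3)(1,10)(2,8)(4,7), (0,9,6,3)(1,4)(2,8)(7,10) }. Then U and V are almost conjugate (Gassmann equivalent) subgroups of T: for every g in T, the number of elements of U that are conjugate to g by an element of T equals the number of elements of V that are conjugate to g by an element of T. -/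
import Mathlib


/-- `a = (0,7,11)(1,5,6)(2,9,10)(3,4,8)` as a permutation of `{0,…,11}`. -/
def a : Equiv.Perm (Fin 12) := c[0, 7, 11] * c[1, 5, 6] * c[2, 9, 10] * c[3, 4, 8]

/-- `b = (0,4,2)(1,5,9)(3,7,11)(6,10,8)` as a permutation of `{0,…,11}`. -/
def b : Equiv.Perm (Fin 12) := c[0, 4, 2] * c[1, 5, 9] * c[3, 7, 11] * c[6, 10, 8]

/-- `T` is the subgroup of the symmetric group on 12 letters generated by `a` and `b`. -/
def T : Subgroup (Equiv.Perm (Fin 12)) := Subgroup.closure {a, b}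

/-- The set `U` of eight permutations. -/
def Uset : Set (Equiv.Perm (Fin 12)) :=
  {1, c[1,7] * c[4,10], c[2,8] * c[5,11], c[1,7] * c[2,8] * c[4,10] * c[5,11],
   c[0,9] * c[2,11,8,5] * c[3,6] * c[4,10], c[0,9] * c[1,7] * c[2,11,8,5] * c[3,6],
   c[0,9] * c[2,5,8,11] * c[3,6] * c[4,10], c[0,9] * c[1,7] * c[2,5,8,11] * c[3,6]}

/-- The set `V` of eight permutations. -/
def Vset : Set (Equiv.Perm (Fin 12)) :=
  {1, c[1,7] * c[4,10], c[0,6] * c[3,9], c[0,6] * c[1,7] * c[3,9] * c[4,10],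
   c[0,3,6,9] * c[1,10] * c[2,8] * c[4,7], c[0,3,6,9] * c[1,4] * c[2,8] * c[7,10],
   c[0,9,6,3] * c[1,10] * c[2,8] * c[4,7], c[0,9,6,3] * c[1,4] * c[2,8] * c[7,10]}
set_option maxRecDepth 10000

noncomputable section AuxST4

open Equiv

def u0 : Equiv.Perm (Fin 12) := 1
def u1 : Equiv.Perm (Fin 12) := c[1,7] * c[4,10]
def u2 : Equiv.Perm (Fin 12) := c[2,8] * c[5,11]
def u3 : Equiv.Perm (Fin 12) := c[1,7] * c[2,8] * c[4,10] * c[5,11]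
def u4 : Equiv.Perm (Fin 12) := c[0,9] * c[2,11,8,5] * c[3,6] * c[4,10]
def u5 : Equiv.Perm (Fin 12) := c[0,9] * c[1,7] * c[2,11,8,5] * c[3,6]
def u6 : Equiv.Perm (Fin 12) := c[0,9] * c[2,5,8,11] * c[3,6] * c[4,10]
def u7 : Equiv.Perm (Fin 12) := c[0,9] * c[1,7] * c[2,5,8,11] * c[3,6]
def v0 : Equiv.Perm (Fin 12) := 1
def v1 : Equiv.Perm (Fin 12) := c[1,7] * c[4,10]
def v2 : Equiv.Perm (Fin 12) := c[0,6] * c[3,9]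
def v3 : Equiv.Perm (Fin 12) := c[0,6] * c[1,7] * c[3,9] * c[4,10]
def v4 : Equiv.Perm (Fin 12) := c[0,3,6,9] * c[1,10] * c[2,8] * c[4,7]
def v5 : Equiv.Perm (Fin 12) := c[0,3,6,9] * c[1,4] * c[2,8] * c[7,10]
def v6 : Equiv.Perm (Fin 12) := c[0,9,6,3] * c[1,10] * c[2,8] * c[4,7]
def v7 : Equiv.Perm (Fin 12) := c[0,9,6,3] * c[1,4] * c[2,8] * c[7,10]

lemma haT : a ∈ T := Subgroup.subset_closure (Or.inl rfl)
lemma hbT : b ∈ T := Subgroup.subset_closure (Or.inr rfl)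

def t2 : Equiv.Perm (Fin 12) := b⁻¹ * a⁻¹ * b⁻¹ * a
def t3 : Equiv.Perm (Fin 12) := a * b * a⁻¹ * b
def t4 : Equiv.Perm (Fin 12) := b⁻¹ * a * b * a * b⁻¹

lemma ht2 : t2 ∈ T := mul_mem (mul_mem (mul_mem (inv_mem hbT) (inv_mem haT)) (inv_mem hbT)) haT
lemma ht3 : t3 ∈ T := mul_mem (mul_mem (mul_mem haT hbT) (inv_mem haT)) hbT
lemma ht4 : t4 ∈ T := mul_mem (mul_mem (mul_mem (mul_mem (inv_mem hbT) haT) hbT) haT) (inv_mem hbT)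

lemma Pmove {u v s : Equiv.Perm (Fin 12)} (hs : s ∈ T) (h : s * u * s⁻¹ = v) (g : Equiv.Perm (Fin 12)) :
    (∃ t ∈ T, t * g * t⁻¹ = u) ↔ (∃ t ∈ T, t * g * t⁻¹ = v) := by
  constructor
  · rintro ⟨t, ht, rfl⟩
    exact ⟨s * t, mul_mem hs ht, by rw [← h]; group⟩
  · rintro ⟨t, ht, rfl⟩
    refine ⟨s⁻¹ * t, mul_mem (inv_mem hs) ht, ?_⟩
    have : u = s⁻¹ * (s * u * s⁻¹) * s := by group
    rw [this, h]; group

end AuxST4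
lemma count_aux (P : Equiv.Perm (Fin 12) → Prop)
    (e2 : P u2 ↔ P v2) (e3 : P u3 ↔ P v3) (e4 : P u4 ↔ P v5)
    (e5 : P u5 ↔ P v6) (e6 : P u6 ↔ P v7) (e7 : P u7 ↔ P v4) :
    {x | x ∈ Uset ∧ P x}.ncard = {x | x ∈ Vset ∧ P x}.ncard := by
  classical
  have e0 : P u0 ↔ P v0 := Iff.rfl
  have e1 : P u1 ↔ P v1 := Iff.rfl
  have hU : {x | x ∈ Uset ∧ P x}
      = ↑(({u0,u1,u2,u3,u4,u5,u6,u7} : Finset (Equiv.Perm (Fin 12))).filter P) := by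
    ext x
    simp only [Set.mem_setOf_eq, Uset, Set.mem_insert_iff, Set.mem_singleton_iff,
      Finset.coe_filter, Finset.mem_insert, Finset.mem_singleton,
      u0, u1, u2, u3, u4, u5, u6, u7]
  have hV : {x | x ∈ Vset ∧ P x}
      = ↑(({v0,v1,v2,v3,v4,v5,v6,v7} : Finset (Equiv.Perm (Fin 12))).filter P) := by
    ext x
    simp only [Set.mem_setOf_eq, Vset, Set.mem_insert_iff, Set.mem_singleton_iff,
      Finset.coe_filter, Finset.mem_insert, Finset.mem_singleton,
      v0, v1, v2, v3, v4, v5, v6, v7]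
  rw [hU, hV, Set.ncard_coe_finset, Set.ncard_coe_finset,
    Finset.card_filter, Finset.card_filter]
  rw [Finset.sum_insert (by decide), Finset.sum_insert (by decide),
    Finset.sum_insert (by decide), Finset.sum_insert (by decide),
    Finset.sum_insert (by decide), Finset.sum_insert (by decide),
    Finset.sum_insert (by decide), Finset.sum_singleton]
  conv_rhs => rw [Finset.sum_insert (by decide), Finset.sum_insert (by decide),
    Finset.sum_insert (by decide), Finset.sum_insert (by decide),
    Finset.sum_insert (by decide), Finset.sum_insert (by decide),
    Finset.sum_insert (by decide), Finset.sum_singleton]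
  simp only [e0, e1, e2, e3, e4, e5, e6, e7]
  ring

/-- `U` and `V` are almost conjugate (Gassmann equivalent) in `T`: for every `g ∈ T`
the conjugacy class of `g` in `T` meets `U` and `V` in the same number of elements. -/
theorem stmt_4 :
    ∀ g ∈ T,
      {x | x ∈ Uset ∧ ∃ t ∈ T, t * g * t⁻¹ = x}.ncard
        = {x | x ∈ Vset ∧ ∃ t ∈ T, t * g * t⁻¹ = x}.ncard := by
  intro g _hg
  exact count_aux _ (Pmove ht2 (by decide) g) (Pmove ht3 (by decide) g)
    (Pmove ht4 (by decide) g) (Pmove ht2 (by decide) g)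
    (Pmove ht4 (by decide) g) (Pmove ht2 (by decide) g)
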